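/- Derivative of the double contour integral factorizes (from the proof of Lemma A.2). With F₁ defined by F₁(y) = ∫_{Y₁∪Y₂} ( ∫_{Y₃∪Y₄} (sz/(s−z)) e^{−2i(ys + 4s³/3)} ds ) e^{2i(yz + 4z³/3)} dz, the function F₁ : ℝ → ℂ is differentiable and for every y ∈ ℝ, F₁'(y) = −2i ( ∫_{Y₁∪Y₂} z e^{2i(yz + 4z³/3)} dz ) ( ∫_{Y₃∪Y₄} s e^{−2i(ys + 4s³/3)} ds ). -/

import Mathlib

open MeasureTheory Set

/-- The unit direction `e^{iπ/6}` of the ray `Y₁`. -/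
noncomputable def e1 : ℂ := Complex.exp (Real.pi / 6 * Complex.I)

/-- The unit direction `e^{5iπ/6}` of the ray `Y₂`. -/
noncomputable def e5 : ℂ := Complex.exp (5 * Real.pi / 6 * Complex.I)

/-- The unit direction `e^{-iπ/6}` of the ray `Y₄`. -/
noncomputable def em1 : ℂ := Complex.exp (-(Real.pi / 6) * Complex.I)

/-- The unit direction `e^{-5iπ/6}` of the ray `Y₃`. -/
noncomputable def em5 : ℂ := Complex.exp (-(5 * Real.pi / 6) * Complex.I)

/-- The contour integral over `Y₁ ∪ Y₂`. -/
noncomputable def CInt12 (h : ℂ → ℂ) : ℂ :=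
  (∫ r in Ioi (0 : ℝ), h (r * e1)) * e1 - (∫ r in Ioi (0 : ℝ), h (r * e5)) * e5

/-- The contour integral over `Y₃ ∪ Y₄`. -/
noncomputable def CInt34 (h : ℂ → ℂ) : ℂ :=
  (∫ r in Ioi (0 : ℝ), h (r * em1)) * em1 - (∫ r in Ioi (0 : ℝ), h (r * em5)) * em5

/-- `F₁(y) = ∫_{Y₁∪Y₂} (∫_{Y₃∪Y₄} (sz/(s-z)) e^{-2i(ys+4s³/3)} ds) e^{2i(yz+4z³/3)} dz`. -/
noncomputable def F1 (y : ℝ) : ℂ :=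
  CInt12 fun z =>
    (CInt34 fun s =>
      s * z / (s - z) * Complex.exp (-(2 * Complex.I) * (y * s + 4 * s ^ 3 / 3))) *
      Complex.exp (2 * Complex.I * (y * z + 4 * z ^ 3 / 3))

structure GoodPair (a b : ℂ) : Prop where
  abs_a : ‖a‖ = 1
  abs_b : ‖b‖ = 1

/-!
Differentiating under the integral sign, `∂_y` of the kernel `sz/(s-z) · e^{2iy(z-s)}` is
`-2i sz · e^{2iy(z-s)}`: the factor `s - z` cancels the denominator, so the derivative of each
iterated integral splits into a product of two single contour integrals.

To justify this, write `z = r a`, `s = r' b` with `|a| = |b| = 1` and `Im a = 1/2 = -Im b`.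
Then `a³ = i` gives `|e^{2i(yz + 4z³/3)}| = e^{-yr - 8r³/3}` (likewise for `s`), and since `z` and
`s` lie in opposite half-planes, `|s - z| ≥ r'/2`, hence `|sz/(s-z)| ≤ 2r`. So the integrand is
dominated, locally uniformly in `y`, by an integrable product on the quadrant `(0,∞)²`, and
Fubini writes `F₁` as a combination of four integrals over that quadrant.
-/

open Complex (I)

noncomputable abbrev cubicWeight (c r : ℝ) : ℝ := Real.exp (c * r - 8 * r ^ 3 / 3)

lemma cubicWeight_pos (c r : ℝ) : 0 < cubicWeight c r := Real.exp_pos _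

lemma cubicWeight_le_of_le {c c' r : ℝ} (hc : c ≤ c') (hr : 0 ≤ r) :
    cubicWeight c r ≤ cubicWeight c' r :=
  Real.exp_le_exp.mpr (by nlinarith)

lemma integrableOn_cubicWeight (c : ℝ) : IntegrableOn (cubicWeight c) (Ioi 0) := by
  have hexp : IntegrableOn (fun r : ℝ => Real.exp ((|c| + 1) ^ 2) * Real.exp (-1 * r)) (Ioi 0) :=
    (exp_neg_integrableOn_Ioi 0 one_pos).const_mul _
  refine hexp.mono' (by unfold cubicWeight; fun_prop) ?_
  filter_upwards [ae_restrict_mem measurableSet_Ioi] with r (hr : 0 < r)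
  have ht : c + 1 ≤ |c| + 1 := by linarith [le_abs_self c]
  have hexponent : c * r - 8 * r ^ 3 / 3 ≤ (|c| + 1) ^ 2 + -1 * r := by
    nlinarith [mul_le_mul_of_nonneg_right ht hr.le, abs_nonneg c, sq_nonneg (r - (|c| + 1)),
      pow_nonneg hr.le 3, mul_nonneg hr.le (sq_nonneg (r - 1))]
  rw [Real.norm_of_nonneg (cubicWeight_pos c r).le, ← Real.exp_add]
  exact Real.exp_le_exp.mpr hexponent

lemma integrableOn_mul_cubicWeight (c : ℝ) :
    IntegrableOn (fun r => r * cubicWeight c r) (Ioi 0) := by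
  refine (integrableOn_cubicWeight (c + 1)).mono' (by unfold cubicWeight; fun_prop) ?_
  filter_upwards [ae_restrict_mem measurableSet_Ioi] with r (hr : 0 < r)
  calc ‖r * cubicWeight c r‖ = r * cubicWeight c r := by
        rw [Real.norm_of_nonneg (mul_pos hr (cubicWeight_pos c r)).le]
    _ ≤ Real.exp r * cubicWeight c r := by
        gcongr
        linarith [Real.add_one_le_exp r]
    _ = cubicWeight (c + 1) r := by unfold cubicWeight; rw [← Real.exp_add]; ring_nf

-- The directions `e^{iπ/6}`, `e^{5iπ/6}` of `Y₁`, `Y₂`, on which `a³ = i`; those of `Y₃`, `Y₄`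
-- are their negatives.
structure IsDecayDir (a : ℂ) : Prop where
  norm_eq_one : ‖a‖ = 1
  im_eq : a.im = 1 / 2

lemma IsDecayDir.norm_of_neg {b : ℂ} (hb : IsDecayDir (-b)) : ‖b‖ = 1 := by
  simpa using hb.norm_eq_one

lemma IsDecayDir.im_pow_three {a : ℂ} (ha : IsDecayDir a) : (a ^ 3).im = 1 := by
  have hre : a.re ^ 2 = 3 / 4 := by
    have := Complex.sq_norm a
    rw [ha.norm_eq_one, Complex.normSq_apply, ha.im_eq] at this
    linarith
  simp only [pow_succ, pow_zero, one_mul, Complex.mul_im, Complex.mul_re, ha.im_eq]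
  linear_combination (3 / 2 : ℝ) * hre

lemma isDecayDir_exp_mul_I {θ : ℝ} (h : Real.sin θ = 1 / 2) :
    IsDecayDir (Complex.exp (θ * I)) :=
  ⟨Complex.norm_exp_ofReal_mul_I θ, by rw [Complex.exp_ofReal_mul_I_im, h]⟩

lemma isDecayDir_neg_exp_mul_I {θ : ℝ} (h : Real.sin θ = -(1 / 2)) :
    IsDecayDir (-Complex.exp (θ * I)) :=
  ⟨by rw [norm_neg, Complex.norm_exp_ofReal_mul_I],
    by rw [Complex.neg_im, Complex.exp_ofReal_mul_I_im, h, neg_neg]⟩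

lemma sin_five_pi_div_six : Real.sin (5 * Real.pi / 6) = 1 / 2 := by
  rw [show 5 * Real.pi / 6 = Real.pi - Real.pi / 6 by ring, Real.sin_pi_sub, Real.sin_pi_div_six]

lemma isDecayDir_e1 : IsDecayDir e1 := by
  simpa [e1] using isDecayDir_exp_mul_I (θ := Real.pi / 6) Real.sin_pi_div_six

lemma isDecayDir_e5 : IsDecayDir e5 := by
  simpa [e5] using isDecayDir_exp_mul_I (θ := 5 * Real.pi / 6) sin_five_pi_div_six

lemma isDecayDir_neg_em1 : IsDecayDir (-em1) := by
  simpa [em1] using isDecayDir_neg_exp_mul_I (θ := -(Real.pi / 6))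
    (by rw [Real.sin_neg, Real.sin_pi_div_six])

lemma isDecayDir_neg_em5 : IsDecayDir (-em5) := by
  simpa [em5] using isDecayDir_neg_exp_mul_I (θ := -(5 * Real.pi / 6))
    (by rw [Real.sin_neg, sin_five_pi_div_six])

noncomputable def airyExp (y : ℝ) (z : ℂ) : ℂ :=
  Complex.exp (2 * I * (y * z + 4 * z ^ 3 / 3))

noncomputable def airyExpNeg (y : ℝ) (s : ℂ) : ℂ :=
  Complex.exp (-(2 * I) * (y * s + 4 * s ^ 3 / 3))

lemma airyExpNeg_eq_airyExp_neg (y : ℝ) (s : ℂ) : airyExpNeg y s = airyExp y (-s) := by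
  unfold airyExpNeg airyExp; ring_nf

lemma norm_airyExp (y : ℝ) (z : ℂ) :
    ‖airyExp y z‖ = Real.exp (-2 * (y * z.im + 4 * (z ^ 3).im / 3)) := by
  rw [airyExp, Complex.norm_exp]
  congr 1
  simp [Complex.mul_re]

lemma norm_airyExp_ofReal_mul {a : ℂ} (ha : IsDecayDir a) (y r : ℝ) :
    ‖airyExp y (r * a)‖ = cubicWeight (-y) r := by
  rw [norm_airyExp, cubicWeight, mul_pow, ← Complex.ofReal_pow, Complex.im_ofReal_mul,
    Complex.im_ofReal_mul, ha.im_eq, ha.im_pow_three]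
  ring_nf

lemma norm_airyExpNeg_ofReal_mul {b : ℂ} (hb : IsDecayDir (-b)) (y r : ℝ) :
    ‖airyExpNeg y (r * b)‖ = cubicWeight (-y) r := by
  rw [airyExpNeg_eq_airyExp_neg, ← mul_neg, norm_airyExp_ofReal_mul hb]

noncomputable def contourKernel (y : ℝ) (z s : ℂ) : ℂ :=
  s * z / (s - z) * airyExpNeg y s * airyExp y z

lemma norm_mul_div_sub_le {s z : ℂ} (h : ‖s‖ ≤ 2 * ‖s - z‖) : ‖s * z / (s - z)‖ ≤ 2 * ‖z‖ := by
  rcases eq_or_ne (s - z) 0 with hsz | hsz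
  · simp [hsz]
  rw [norm_div, norm_mul, div_le_iff₀ (norm_pos_iff.mpr hsz)]
  nlinarith [norm_nonneg z]

-- `z = r a` and `s = r' b` lie in opposite half-planes, so `|s - z| ≥ |Im (s - z)| = (r + r') / 2`.
lemma le_two_mul_norm_ofReal_mul_sub {a b : ℂ} (ha : IsDecayDir a) (hb : IsDecayDir (-b))
    {r r' : ℝ} (hr : 0 ≤ r) : r' ≤ 2 * ‖r' * b - r * a‖ := by
  have him : (r' * b - r * a).im = -((r' + r) / 2) := by
    have hb' : -b.im = 1 / 2 := hb.im_eq
    rw [Complex.sub_im, Complex.im_ofReal_mul, Complex.im_ofReal_mul, ha.im_eq]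
    linear_combination (-r') * hb'
  have := Complex.abs_im_le_norm (r' * b - r * a)
  rw [him, abs_neg] at this
  linarith [le_abs_self ((r' + r) / 2)]

lemma norm_contourKernel_le {a b : ℂ} (ha : IsDecayDir a) (hb : IsDecayDir (-b)) (y : ℝ)
    {r r' : ℝ} (hr : 0 ≤ r) (hr' : 0 ≤ r') :
    ‖contourKernel y (r * a) (r' * b)‖ ≤ 2 * (r * cubicWeight (-y) r) * cubicWeight (-y) r' := by
  have hsep : ‖(r' : ℂ) * b‖ ≤ 2 * ‖r' * b - r * a‖ := by
    rw [norm_mul, hb.norm_of_neg, mul_one, Complex.norm_real, Real.norm_of_nonneg hr']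
    exact le_two_mul_norm_ofReal_mul_sub ha hb hr
  have hz : ‖(r : ℂ) * a‖ = r := by
    rw [norm_mul, ha.norm_eq_one, mul_one, Complex.norm_real, Real.norm_of_nonneg hr]
  rw [contourKernel, norm_mul, norm_mul, norm_airyExp_ofReal_mul ha,
    norm_airyExpNeg_ofReal_mul hb]
  have hfrac := norm_mul_div_sub_le hsep
  rw [hz] at hfrac
  calc _ ≤ 2 * r * cubicWeight (-y) r' * cubicWeight (-y) r := by
        gcongr
    _ = _ := by ring

noncomputable def quadrant : Measure (ℝ × ℝ) :=
  (volume.restrict (Ioi 0)).prod (volume.restrict (Ioi 0))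

noncomputable def rayPairIntegral (g : ℂ → ℂ → ℂ) (a b : ℂ) : ℂ :=
  ∫ p, g (p.1 * a) (p.2 * b) ∂quadrant

lemma ae_quadrant : ∀ᵐ p ∂quadrant, 0 < p.1 ∧ 0 < p.2 := by
  rw [quadrant, Measure.prod_restrict, ← Measure.volume_eq_prod]
  exact ae_restrict_mem (measurableSet_Ioi.prod measurableSet_Ioi)

lemma integrable_contourKernel {a b : ℂ} (ha : IsDecayDir a) (hb : IsDecayDir (-b)) (y : ℝ) :
    Integrable (fun p : ℝ × ℝ => contourKernel y (p.1 * a) (p.2 * b)) quadrant := by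
  have hbound : Integrable
      (fun p : ℝ × ℝ => 2 * (p.1 * cubicWeight (-y) p.1) * cubicWeight (-y) p.2) quadrant := by
    simpa only [quadrant, mul_assoc] using
      ((integrableOn_mul_cubicWeight (-y)).mul_prod (integrableOn_cubicWeight (-y))).const_mul 2
  refine hbound.mono' (by unfold contourKernel airyExp airyExpNeg; fun_prop) ?_
  filter_upwards [ae_quadrant] with p hp
  exact norm_contourKernel_le ha hb y hp.1.le hp.2.le

lemma hasDerivAt_airyExp (y : ℝ) (z : ℂ) :
    HasDerivAt (fun y : ℝ => airyExp y z) (2 * I * z * airyExp y z) y := by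
  have := ((((hasDerivAt_id (y : ℂ)).mul_const z).add_const (4 * z ^ 3 / 3)).const_mul
    (2 * I)).cexp.comp_ofReal
  simpa [airyExp, mul_comm] using this

lemma hasDerivAt_airyExpNeg (y : ℝ) (s : ℂ) :
    HasDerivAt (fun y : ℝ => airyExpNeg y s) (-(2 * I) * s * airyExpNeg y s) y := by
  simpa [airyExpNeg_eq_airyExp_neg] using hasDerivAt_airyExp y (-s)

lemma hasDerivAt_contourKernel {z s : ℂ} (hsz : s ≠ z) (y : ℝ) :
    HasDerivAt (fun y => contourKernel y z s)
      (-(2 * I) * (z * airyExp y z) * (s * airyExpNeg y s)) y := by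
  refine (((hasDerivAt_airyExpNeg y s).const_mul (s * z / (s - z))).mul
    (hasDerivAt_airyExp y z)).congr_deriv ?_
  field_simp [sub_ne_zero.mpr hsz]
  ring

lemma hasDerivAt_integral_contourKernel {a b : ℂ} (ha : IsDecayDir a) (hb : IsDecayDir (-b))
    (y₀ : ℝ) :
    HasDerivAt (fun y => rayPairIntegral (contourKernel y) a b)
      (-(2 * I) * (∫ r in Ioi (0 : ℝ), r * a * airyExp y₀ (r * a)) *
        ∫ r in Ioi (0 : ℝ), r * b * airyExpNeg y₀ (r * b)) y₀ := by
  set c := |y₀| + 1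
  have hderiv := hasDerivAt_integral_of_dominated_loc_of_deriv_le (μ := quadrant)
    (F' := fun y (p : ℝ × ℝ) => -(2 * I) * (p.1 * a * airyExp y (p.1 * a)) *
      (p.2 * b * airyExpNeg y (p.2 * b)))
    (bound := fun p => 2 * (p.1 * cubicWeight c p.1) * (p.2 * cubicWeight c p.2))
    (Metric.ball_mem_nhds y₀ one_pos)
    (.of_forall fun y => (integrable_contourKernel ha hb y).aestronglyMeasurable)
    (integrable_contourKernel ha hb y₀)
    (by unfold airyExp airyExpNeg; fun_prop) ?_ ?_ ?_
  · refine hderiv.2.congr_deriv ?_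
    simp_rw [quadrant, mul_assoc (-(2 * I))]
    rw [integral_const_mul,
      integral_prod_mul (fun r : ℝ => (r : ℂ) * a * airyExp y₀ (r * a))
        (fun r : ℝ => (r : ℂ) * b * airyExpNeg y₀ (r * b))]
  · filter_upwards [ae_quadrant] with p ⟨hp₁, hp₂⟩ y hy
    have hyc : -y ≤ c := by
      have := abs_sub_lt_iff.mp (Metric.mem_ball.mp hy)
      linarith [neg_abs_le y₀]
    simp only [norm_mul, norm_neg, Complex.norm_ofNat, Complex.norm_I, Complex.norm_real,
      Real.norm_of_nonneg hp₁.le, Real.norm_of_nonneg hp₂.le, ha.norm_eq_one, hb.norm_of_neg,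
      mul_one, norm_airyExp_ofReal_mul ha, norm_airyExpNeg_ofReal_mul hb]
    have h₁ := cubicWeight_le_of_le hyc hp₁.le
    have h₂ := cubicWeight_le_of_le hyc hp₂.le
    gcongr
  · simpa only [quadrant, mul_assoc] using
      ((integrableOn_mul_cubicWeight c).mul_prod (integrableOn_mul_cubicWeight c)).const_mul 2
  · filter_upwards [ae_quadrant] with p ⟨hp₁, hp₂⟩ y _
    refine hasDerivAt_contourKernel (fun h => ?_) y
    have := le_two_mul_norm_ofReal_mul_sub ha hb hp₁.le (r' := p.2)
    rw [h, sub_self, norm_zero] at this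
    linarith

lemma CInt34_mul_const (h : ℂ → ℂ) (c : ℂ) : CInt34 h * c = CInt34 fun s => h s * c := by
  simp only [CInt34, integral_mul_const]
  ring

lemma F1_eq_CInt12_CInt34 (y : ℝ) :
    F1 y = CInt12 fun z => CInt34 fun s => contourKernel y z s := by
  simp only [F1, CInt34_mul_const]
  rfl

lemma integral_Ioi_CInt34 {g : ℂ → ℂ → ℂ} {a : ℂ}
    (h₁ : Integrable (fun p : ℝ × ℝ => g (p.1 * a) (p.2 * em1)) quadrant)
    (h₅ : Integrable (fun p : ℝ × ℝ => g (p.1 * a) (p.2 * em5)) quadrant) :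
    ∫ r in Ioi (0 : ℝ), CInt34 (g (r * a)) =
      rayPairIntegral g a em1 * em1 - rayPairIntegral g a em5 * em5 := by
  unfold CInt34 rayPairIntegral
  rw [integral_sub (h₁.integral_prod_left.mul_const _) (h₅.integral_prod_left.mul_const _),
    integral_mul_const, integral_mul_const, quadrant, integral_prod _ h₁, integral_prod _ h₅]

lemma CInt12_CInt34_eq {g : ℂ → ℂ → ℂ}
    (hg : ∀ a b, IsDecayDir a → IsDecayDir (-b) →
      Integrable (fun p : ℝ × ℝ => g (p.1 * a) (p.2 * b)) quadrant) :
    (CInt12 fun z => CInt34 (g z)) =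
      (rayPairIntegral g e1 em1 * em1 - rayPairIntegral g e1 em5 * em5) * e1 -
        (rayPairIntegral g e5 em1 * em1 - rayPairIntegral g e5 em5 * em5) * e5 := by
  rw [CInt12, integral_Ioi_CInt34 (hg _ _ isDecayDir_e1 isDecayDir_neg_em1)
      (hg _ _ isDecayDir_e1 isDecayDir_neg_em5),
    integral_Ioi_CInt34 (hg _ _ isDecayDir_e5 isDecayDir_neg_em1)
      (hg _ _ isDecayDir_e5 isDecayDir_neg_em5)]

/-- Derivative of the double contour integral factorizes (from the proof of Lemma A.2). -/
theorem deriv_double_contour_factorizes :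
    ∀ y : ℝ,
      HasDerivAt F1
        (-(2 * Complex.I) *
          CInt12 (fun z => z * Complex.exp (2 * Complex.I * (y * z + 4 * z ^ 3 / 3))) *
          CInt34 (fun s => s * Complex.exp (-(2 * Complex.I) * (y * s + 4 * s ^ 3 / 3)))) y := by
  intro y
  have hF1 : F1 = fun y =>
      (rayPairIntegral (contourKernel y) e1 em1 * em1 -
          rayPairIntegral (contourKernel y) e1 em5 * em5) * e1 -
        (rayPairIntegral (contourKernel y) e5 em1 * em1 -
          rayPairIntegral (contourKernel y) e5 em5 * em5) * e5 := by
    ext y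
    rw [F1_eq_CInt12_CInt34, CInt12_CInt34_eq fun a b ha hb => integrable_contourKernel ha hb y]
  have d₁₁ := hasDerivAt_integral_contourKernel isDecayDir_e1 isDecayDir_neg_em1 y
  have d₁₅ := hasDerivAt_integral_contourKernel isDecayDir_e1 isDecayDir_neg_em5 y
  have d₅₁ := hasDerivAt_integral_contourKernel isDecayDir_e5 isDecayDir_neg_em1 y
  have d₅₅ := hasDerivAt_integral_contourKernel isDecayDir_e5 isDecayDir_neg_em5 y
  rw [hF1]
  refine ((((d₁₁.mul_const em1).sub (d₁₅.mul_const em5)).mul_const e1).sub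
    (((d₅₁.mul_const em1).sub (d₅₅.mul_const em5)).mul_const e5)).congr_deriv ?_
  simp only [CInt12, CInt34, airyExp, airyExpNeg]
  ring
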